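/- Let μ > 0 and let N be an even integer with N > 2μ. Then every entry of the inverse of T_N(μ) satisfies |(T_N(μ)⁻¹)_{i,l}| ≤ √2/μ for all 1 ≤ i, l ≤ N. -/

import Mathlib

/-!
Column `l` of `T_N(μ)⁻¹`, shifted by one and padded with zeros, is a sequence `U` with
`μ U j + (2j+2) U (j+1) - μ U (j+2) = δ j l`. As `T_N(μ) + T_N(μ)ᵀ` is diagonal,
`∑ (2j+2) U (j+1)² = U (l+1)`, so the diagonal entry is positive. Below the diagonal the
recurrence, started from `U 0 = 0`, keeps `U` nonnegative with `U j ≤ U (j+2)`; above it `U`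
alternates in sign and `|U (j+2)| ≤ |U j|`. Hence every entry is bounded by `U l`, `U (l+1)` or
`|U (l+2)|`, and row `l`, `μ U l + (2l+2) U (l+1) + μ |U (l+2)| = 1`, bounds the first and the
last by `1/μ`. For the diagonal entry, a downward induction from the last row gives
`(μ - j - 2) |U (j+1)| ≤ μ |U (j+2)|` for `j ≥ l` as long as `μ ≤ N + 1`; at `j = l` this turns
row `l` into `μ U (l+1) ≤ 1`. So all entries are at most `1/μ ≤ √2/μ`.
-/

/-- The `N × N` tridiagonal matrix `T_N(μ)` with diagonal `2, 4, …, 2N`, subdiagonal `μ`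
and superdiagonal `-μ` (0-based indexing). -/
noncomputable def Tmat (N : ℕ) (μ : ℝ) : Matrix (Fin N) (Fin N) ℝ :=
  Matrix.of fun i j =>
    if (i : ℕ) = (j : ℕ) then 2 * (((i : ℕ) : ℝ) + 1)
    else if (i : ℕ) = (j : ℕ) + 1 then μ
    else if (j : ℕ) = (i : ℕ) + 1 then -μ
    else 0

open Finset Matrix

section TwoStep

variable {α : Type*} [Preorder α] {f : ℕ → α} {B : α}

lemma le_of_two_step_antitone {a : ℕ} (hstep : ∀ j, a ≤ j → f (j + 2) ≤ f j)
    (h₀ : f a ≤ B) (h₁ : f (a + 1) ≤ B) : ∀ i, a ≤ i → f i ≤ B := by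
  suffices ∀ i, a ≤ i → f i ≤ B ∧ f (i + 1) ≤ B from fun i hi => (this i hi).1
  intro i hi
  induction i, hi using Nat.le_induction with
  | base => exact ⟨h₀, h₁⟩
  | succ i hi ih => exact ⟨ih.2, (hstep i hi).trans ih.1⟩

lemma le_of_two_step_monotone {n : ℕ} (hstep : ∀ j, j + 2 ≤ n + 1 → f j ≤ f (j + 2))
    (h₀ : f n ≤ B) (h₁ : f (n + 1) ≤ B) : ∀ i, i ≤ n + 1 → f i ≤ B := by
  suffices ∀ i, i ≤ n → f i ≤ B ∧ f (i + 1) ≤ B by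
    intro i hi
    rcases hi.lt_or_eq with hi | rfl
    · exact (this i (by omega)).1
    · exact h₁
  intro i hi
  induction hi using Nat.decreasingInduction with
  | self => exact ⟨h₀, h₁⟩
  | of_succ i hi ih => exact ⟨(hstep i (by omega)).trans ih.2, ih.1⟩

end TwoStep

def triRow (μ : ℝ) (U : ℕ → ℝ) (j : ℕ) : ℝ :=
  μ * U j + (2 * j + 2) * U (j + 1) - μ * U (j + 2)

/-- `x` shifted by one and padded with zeros, so that row `j` of `T_N(μ) x` is
`triRow μ (colSeq x) j` with no boundary cases (`Tmat_mulVec_apply`). -/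
def colSeq {N : ℕ} (x : Fin N → ℝ) (n : ℕ) : ℝ :=
  ∑ k : Fin N, if (k : ℕ) + 1 = n then x k else 0

section ColSeq

variable {N : ℕ} (x : Fin N → ℝ)

@[simp] lemma colSeq_zero : colSeq x 0 = 0 := by simp [colSeq]

lemma colSeq_of_lt {n : ℕ} (hn : N < n) : colSeq x n = 0 :=
  Finset.sum_eq_zero fun k _ => if_neg (by omega)

@[simp] lemma colSeq_succ (k : Fin N) : colSeq x (k + 1) = x k := by
  simp [colSeq, Fin.val_inj]

lemma Tmat_mulVec_apply (μ : ℝ) (j : Fin N) :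
    (Tmat N μ *ᵥ x) j = triRow μ (colSeq x) j := by
  simp only [mulVec, dotProduct, triRow, colSeq, Finset.mul_sum, ← Finset.sum_sub_distrib,
    ← Finset.sum_add_distrib]
  refine Finset.sum_congr rfl fun k _ => ?_
  simp only [Tmat, of_apply]
  split_ifs <;> first | omega | ring

end ColSeq

lemma sum_mul_triRow (μ : ℝ) {N : ℕ} {U : ℕ → ℝ} (h₀ : U 0 = 0) (hN : U (N + 1) = 0) :
    ∑ j ∈ range N, U (j + 1) * triRow μ U j = ∑ j ∈ range N, (2 * j + 2) * U (j + 1) ^ 2 := by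
  have htel := Finset.sum_range_sub' (fun j => U j * U (j + 1)) N
  simp only [h₀, hN, zero_mul, mul_zero, sub_zero] at htel
  have : ∀ j, U (j + 1) * triRow μ U j
      = (2 * j + 2) * U (j + 1) ^ 2 + μ * (U j * U (j + 1) - U (j + 1) * U (j + 1 + 1)) := by
    intro j; simp only [triRow]; ring
  rw [Finset.sum_congr rfl fun j _ => this j, Finset.sum_add_distrib, ← Finset.mul_sum, htel,
    mul_zero, add_zero]

lemma nonneg_of_triRow_eq_zero {μ : ℝ} {n : ℕ} {V : ℕ → ℝ} (hμ : 0 < μ) (h₀ : V 0 = 0)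
    (h₁ : 0 ≤ V 1) (hrow : ∀ j < n, triRow μ V j = 0) : ∀ j ≤ n + 1, 0 ≤ V j := by
  suffices ∀ j ≤ n, 0 ≤ V j ∧ 0 ≤ V (j + 1) by
    intro j hj
    rcases Nat.lt_or_ge j (n + 1) with hj' | hj'
    · exact (this j (by omega)).1
    · exact (this n le_rfl).2.trans_eq (by rw [show j = n + 1 by omega])
  intro j hj
  induction j with
  | zero => exact ⟨h₀.ge, h₁⟩
  | succ j ih =>
    obtain ⟨hj₀, hj₁⟩ := ih (by omega)
    have := hrow j (by omega)
    simp only [triRow] at this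
    refine ⟨hj₁, nonneg_of_mul_nonneg_right ?_ hμ⟩
    nlinarith

lemma sub_mul_le_of_recurrence {μ k b c d : ℝ} (hμ : 0 < μ) (hk : 0 ≤ k) (hb : 0 ≤ b)
    (hc : 0 ≤ c) (hrec : μ * b = μ * d + 2 * k * c) (hd : (μ + k) * d ≤ μ * c) :
    (μ - k) * b ≤ μ * c := by
  rcases le_or_gt μ k with hμk | hkμ
  · exact (mul_nonpos_of_nonpos_of_nonneg (by linarith) hb).trans (by positivity)
  refine le_of_mul_le_mul_left ?_ (by positivity : 0 < μ * (μ + k))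
  calc μ * (μ + k) * ((μ - k) * b) = (μ - k) * ((μ + k) * μ * d + 2 * k * (μ + k) * c) := by
        linear_combination (μ - k) * (μ + k) * hrec
    _ ≤ (μ - k) * (μ * μ * c + 2 * k * (μ + k) * c) := by
        gcongr _ * (?_ + _)
        linear_combination μ * hd
    _ = μ * (μ + k) * (μ * c) - 2 * k ^ 3 * c := by ring
    _ ≤ μ * (μ + k) * (μ * c) := by nlinarith [mul_nonneg (pow_nonneg hk 3) hc]

lemma sub_mul_le_of_forall_three_term {μ : ℝ} {N m : ℕ} {a : ℕ → ℝ} (hμ : 0 < μ)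
    (hμN : μ ≤ N + 1) (ha : ∀ n, 0 ≤ a n) (htop : ∀ n, N < n → a n = 0)
    (hrec : ∀ j, m ≤ j → j < N → μ * a j = μ * a (j + 2) + (2 * j + 2) * a (j + 1))
    (j : ℕ) (hj : m ≤ j + 1) : (μ - (j + 2)) * a (j + 1) ≤ μ * a (j + 2) := by
  by_cases hjN : N ≤ j + 1
  · have : (N : ℝ) ≤ j + 1 := by exact_mod_cast hjN
    exact (mul_nonpos_of_nonpos_of_nonneg (by linarith) (ha _)).trans
      (mul_nonneg hμ.le (ha _))
  have hnext : (μ + (j + 2 : ℕ)) * a (j + 3) ≤ μ * a (j + 2) := by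
    by_cases hj₂ : j + 2 < N
    · have h₁ := sub_mul_le_of_forall_three_term hμ hμN ha htop hrec (j + 2) (by omega)
      have h₂ := hrec (j + 2) (by omega) hj₂
      push_cast at h₁ h₂ ⊢
      linarith
    · rw [htop (j + 3) (by omega), mul_zero]
      exact mul_nonneg hμ.le (ha _)
  have hrec₁ := hrec (j + 1) (by omega) (by omega)
  push_cast at hnext hrec₁
  exact sub_mul_le_of_recurrence (k := j + 2) (d := a (j + 3)) hμ (by positivity) (ha _) (ha _)
    (by linear_combination hrec₁) hnext
termination_by N - j

/-- `U` solves `T_N(μ) x = e_l` in the encoding of `colSeq`. -/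
structure SolvesTriSystem (μ : ℝ) (N l : ℕ) (U : ℕ → ℝ) : Prop where
  zero : U 0 = 0
  eq_zero_of_lt : ∀ n, N < n → U n = 0
  row : ∀ j < N, triRow μ U j = if j = l then 1 else 0

namespace SolvesTriSystem

variable {μ : ℝ} {N l : ℕ} {U : ℕ → ℝ}

lemma row_of_ne (hU : SolvesTriSystem μ N l U) {j : ℕ} (hj : j < N) (hjl : j ≠ l) :
    triRow μ U j = 0 := by
  rw [hU.row j hj, if_neg hjl]

lemma sum_sq_eq (hU : SolvesTriSystem μ N l U) (hl : l < N) :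
    ∑ j ∈ range N, (2 * j + 2) * U (j + 1) ^ 2 = U (l + 1) := by
  rw [← sum_mul_triRow μ hU.zero (hU.eq_zero_of_lt _ (by omega)),
    Finset.sum_congr rfl fun j hj => by rw [hU.row j (Finset.mem_range.mp hj)]]
  simp [hl]

lemma diag_pos (hU : SolvesTriSystem μ N l U) (hl : l < N) : 0 < U (l + 1) := by
  have hterm : ∀ j ∈ range N, 0 ≤ (2 * (j : ℝ) + 2) * U (j + 1) ^ 2 := fun j _ => by positivity
  refine (hU.sum_sq_eq hl ▸ Finset.sum_nonneg hterm).lt_of_ne fun hzero => ?_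
  have hvanish : U = 0 := by
    funext n
    rcases n with _ | n
    · exact hU.zero
    rcases Nat.lt_or_ge n N with hn | hn
    · have := (Finset.sum_eq_zero_iff_of_nonneg hterm).mp (hU.sum_sq_eq hl ▸ hzero.symm) n
        (Finset.mem_range.mpr hn)
      simpa [show (2 * (n : ℝ) + 2) ≠ 0 by positivity] using this
    · exact hU.eq_zero_of_lt _ (by omega)
  simpa [hvanish, triRow] using hU.row l hl

lemma nonneg_of_le_succ (hU : SolvesTriSystem μ N l U) (hμ : 0 < μ) (hl : l < N) :
    ∀ j ≤ l + 1, 0 ≤ U j := by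
  have hrow : ∀ j < l, triRow μ U j = 0 := fun j hj => hU.row_of_ne (by omega) hj.ne
  rcases le_or_gt 0 (U 1) with h₁ | h₁
  · exact nonneg_of_triRow_eq_zero hμ hU.zero h₁ hrow
  · have hneg := nonneg_of_triRow_eq_zero (V := -U) hμ (by simp [hU.zero]) (by simpa using h₁.le)
      (fun j hj => by simp only [triRow, Pi.neg_apply] at hrow ⊢; linarith [hrow j hj])
      (l + 1) le_rfl
    simp only [Pi.neg_apply, Left.nonneg_neg_iff] at hneg
    exact absurd (hU.diag_pos hl) hneg.not_gt

lemma mul_succ_nonpos (hU : SolvesTriSystem μ N l U) (hμ : 0 < μ) (j : ℕ) (hj : l ≤ j) :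
    U (j + 1) * U (j + 2) ≤ 0 := by
  by_cases hjN : N ≤ j + 1
  · rw [hU.eq_zero_of_lt (j + 2) (by omega), mul_zero]
  · have hnext : U (j + 2) * U (j + 3) ≤ 0 := mul_succ_nonpos hU hμ (j + 1) (by omega)
    have hrow : μ * U (j + 1) + (2 * j + 4) * U (j + 2) - μ * U (j + 3) = 0 := by
      have := hU.row_of_ne (j := j + 1) (by omega) (by omega)
      simp only [triRow] at this
      push_cast at this
      linear_combination this
    have hsq : 0 ≤ (2 * (j : ℝ) + 4) * U (j + 2) ^ 2 := by positivity
    refine nonpos_of_mul_nonpos_right ?_ hμ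
    linear_combination U (j + 2) * hrow + mul_nonpos_of_nonneg_of_nonpos hμ.le hnext + hsq
termination_by N - j

lemma abs_rec (hU : SolvesTriSystem μ N l U) (hμ : 0 < μ) {j : ℕ} (hlj : l < j) (hjN : j < N) :
    μ * |U j| = μ * |U (j + 2)| + (2 * j + 2) * |U (j + 1)| := by
  have hrow := hU.row_of_ne hjN hlj.ne'
  simp only [triRow] at hrow
  have hprod : |U (j + 1)| * |U (j + 2)| = -(U (j + 1) * U (j + 2)) := by
    rw [← abs_mul, abs_of_nonpos (hU.mul_succ_nonpos hμ j hlj.le)]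
  rw [← pow_left_inj₀ (by positivity) (by positivity) two_ne_zero]
  simp only [mul_pow, add_sq, sq_abs]
  linear_combination
    (μ * U j + μ * U (j + 2) - (2 * j + 2) * U (j + 1)) * hrow - 2 * μ * (2 * j + 2) * hprod

lemma le_add_two (hU : SolvesTriSystem μ N l U) (hμ : 0 < μ) (hl : l < N) {j : ℕ}
    (hj : j + 2 ≤ l + 1) : U j ≤ U (j + 2) := by
  have hrow := hU.row_of_ne (j := j) (by omega) (by omega)
  rw [triRow] at hrow
  nlinarith [hU.nonneg_of_le_succ hμ hl (j + 1) (by omega)]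

lemma abs_add_two_le (hU : SolvesTriSystem μ N l U) (hμ : 0 < μ) {j : ℕ} (hj : l + 1 ≤ j) :
    |U (j + 2)| ≤ |U j| := by
  rcases Nat.lt_or_ge j N with hjN | hjN
  · nlinarith [hU.abs_rec hμ (by omega : l < j) hjN, abs_nonneg (U (j + 1))]
  · simp [hU.eq_zero_of_lt (j + 2) (by omega)]

lemma abs_le (hU : SolvesTriSystem μ N l U) (hμ : 0 < μ) (hμN : μ ≤ N + 1) (hl : l < N)
    (n : ℕ) : |U n| ≤ 1 / μ := by
  have hdiag := hU.diag_pos hl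
  have hbot := hU.nonneg_of_le_succ hμ hl
  have hUl₂_nonpos : U (l + 2) ≤ 0 :=
    nonpos_of_mul_nonpos_right (hU.mul_succ_nonpos hμ l le_rfl) hdiag
  have hrowl : μ * U l + (2 * l + 2) * U (l + 1) + μ * |U (l + 2)| = 1 := by
    have := hU.row l hl
    rw [if_pos rfl, triRow] at this
    rw [abs_of_nonpos hUl₂_nonpos]
    linarith
  have hdecay := sub_mul_le_of_forall_three_term (a := fun n => |U n|) hμ hμN
    (fun _ => abs_nonneg _) (fun n hn => by simp [hU.eq_zero_of_lt n hn])
    (fun j hj hjN => hU.abs_rec hμ hj hjN) l le_rfl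
  simp only [abs_of_pos hdiag] at hdecay
  have hl₀ := hbot l (by omega)
  have hUl : U l ≤ 1 / μ := by rw [le_div_iff₀' hμ]; nlinarith [abs_nonneg (U (l + 2))]
  have hUl₁ : U (l + 1) ≤ 1 / μ := by rw [le_div_iff₀' hμ]; nlinarith
  have hUl₂ : |U (l + 2)| ≤ 1 / μ := by rw [le_div_iff₀' hμ]; nlinarith
  rcases le_or_gt n (l + 1) with hn | hn
  · rw [abs_of_nonneg (hbot n hn)]
    exact le_of_two_step_monotone (f := U) (n := l) (fun j hj => hU.le_add_two hμ hl hj) hUl hUl₁ n hn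
  · exact le_of_two_step_antitone (f := fun n => |U n|) (fun j hj => hU.abs_add_two_le hμ hj)
      (by rwa [abs_of_pos hdiag]) hUl₂ n hn.le

end SolvesTriSystem

lemma solvesTriSystem_colSeq_inv {N : ℕ} {μ : ℝ} (hT : IsUnit (Tmat N μ).det) (l : Fin N) :
    SolvesTriSystem μ N l (colSeq fun k => (Tmat N μ)⁻¹ k l) where
  zero := colSeq_zero _
  eq_zero_of_lt _ := colSeq_of_lt _
  row j hj := by
    rw [← Tmat_mulVec_apply _ μ ⟨j, hj⟩]
    have := congrFun (congrFun (mul_nonsing_inv _ hT) ⟨j, hj⟩) l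
    rw [mul_apply, one_apply] at this
    simpa [mulVec, dotProduct, Fin.ext_iff] using this

theorem stmt10_general (μ : ℝ) (hμ : 0 < μ) (N : ℕ) (hN : 2 * μ < (N : ℝ)) :
    ∀ i l : Fin N, |(Tmat N μ)⁻¹ i l| ≤ Real.sqrt 2 / μ := by
  intro i l
  have hsqrt : 1 / μ ≤ Real.sqrt 2 / μ := by gcongr; simp
  by_cases hT : IsUnit (Tmat N μ).det
  · rw [← colSeq_succ (fun k => (Tmat N μ)⁻¹ k l) i]
    exact ((solvesTriSystem_colSeq_inv hT l).abs_le hμ (by linarith) l.isLt _).trans hsqrt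
  · -- `T_N(μ)` is in fact invertible; this case only covers the junk value `⁻¹ = 0`.
    rw [nonsing_inv_apply_not_isUnit _ hT]
    simpa using div_nonneg (Real.sqrt_nonneg 2) hμ.le

/-- Entrywise bound `|(T_N(μ)⁻¹)_{i,l}| ≤ √2/μ` for all even `N > 2μ`. -/
theorem stmt10 (μ : ℝ) (hμ : 0 < μ) (N : ℕ) (hNe : Even N) (hN : 2 * μ < (N : ℝ)) :
    ∀ i l : Fin N, |(Tmat N μ)⁻¹ i l| ≤ Real.sqrt 2 / μ :=
  stmt10_general μ hμ N hN
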